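/- arXiv:0810.3147 — 2 statements merged into one kernel-verified Lean document; each statement's English description precedes it below -/
import Mathlib

section
/- Let A be a Dedekind domain which is not a field such that A/𝔞 is finite for every nonzero ideal 𝔞 ⊆ A, let 𝔞 ⊆ A be a nonzero ideal, let r ≥ 1, and let x ∈ (A/𝔞)^r be an element whose annihilator in A equals 𝔞 (equivalently, whose annihilator in A/𝔞 is zero). Then the orbit of x under the natural action of GL_r(A/𝔞) on (A/𝔞)^r has cardinality |𝔞|^r·∏_{𝔭 | 𝔞}(1 - |𝔭|^{-r}), the product being over the nonzero prime ideals 𝔭 dividing 𝔞; equivalently, the stabilizer of x in GL_r(A/𝔞) has index |𝔞|^r·∏_{𝔭 | 𝔞}(1 - |𝔭|^{-r}). -/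
/-- The absolute norm `|𝔞|` of an ideal `𝔞 ⊆ A`: the cardinality of `A ⧸ 𝔞`. -/
noncomputable def idealNorm {A : Type*} [CommRing A] (𝔞 : Ideal A) : ℕ := Nat.card (A ⧸ 𝔞)

/-- The set of nonzero prime ideals of `A` dividing `𝔞`. -/
def primesDvd {A : Type*} [CommRing A] (𝔞 : Ideal A) : Set (Ideal A) :=
  {𝔭 | 𝔭.IsPrime ∧ 𝔭 ≠ ⊥ ∧ 𝔭 ∣ 𝔞}

/-- `θ(𝔞) = ∏_{𝔭 ∣ 𝔞} (1 - 1/|𝔭|)⁻¹`, the product over the nonzero primes dividing `𝔞`. -/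
noncomputable def theta {A : Type*} [CommRing A] (𝔞 : Ideal A) : ℝ :=
  ∏ᶠ 𝔭 ∈ primesDvd 𝔞, (1 - (idealNorm 𝔭 : ℝ)⁻¹)⁻¹

/-!
The orbit of `x` is exactly the set of vectors of `(A ⧸ 𝔞)^r` with zero annihilator. By the
Chinese remainder theorem `A ⧸ 𝔞 ≅ ∏ A ⧸ 𝔭^e`, and both the annihilator condition and the action of
`GL_r` split along this product. The local factor `A ⧸ 𝔭^e` maps onto the field `A ⧸ 𝔭` with
nilpotent kernel, so a vector there has zero annihilator iff one of its coordinates is a unit, i.e.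
iff it does not vanish modulo `𝔭`. Such a vector is a column of an invertible matrix, so `GL_r` acts
transitively on these vectors, and there are
`|A ⧸ 𝔭^e|^r - |𝔭 ⧸ 𝔭^e|^r = |A ⧸ 𝔭^e|^r (1 - |𝔭|^{-r})` of them.
-/

open Matrix MulAction

def faithfulVectors (R n : Type*) [CommRing R] : Set (n → R) :=
  {y | ∀ c : R, c • y = 0 → c = 0}

section CommRing

variable {R n : Type*} [CommRing R]

theorem mem_faithfulVectors_of_isUnit {y : n → R} {j : n} (hj : IsUnit (y j)) :
    y ∈ faithfulVectors R n := fun _ hc =>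
  hj.mul_left_eq_zero.1 (congrFun hc j)

variable [Fintype n] [DecidableEq n]

theorem smul_mem_faithfulVectors_iff (g : GL n R) {y : n → R} :
    g • y ∈ faithfulVectors R n ↔ y ∈ faithfulVectors R n := by
  simp only [faithfulVectors, Set.mem_ofPred_eq, smul_comm _ g, smul_eq_zero_iff_eq]

theorem orbit_subset_faithfulVectors {x : n → R} (hx : x ∈ faithfulVectors R n) :
    orbit (GL n R) x ⊆ faithfulVectors R n := by
  rintro _ ⟨g, rfl⟩
  exact (smul_mem_faithfulVectors_iff g).2 hx

theorem mem_orbit_single_of_isUnit {y : n → R} {j : n} (hj : IsUnit (y j)) :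
    y ∈ orbit (GL n R) (Pi.single j 1) := by
  have hdet : ((1 : Matrix n n R).updateCol j y).det = y j := by
    rw [← cramer_apply, cramer_one]; rfl
  have hunit : IsUnit ((1 : Matrix n n R).updateCol j y) := by
    rwa [isUnit_iff_isUnit_det, hdet]
  refine ⟨hunit.unit, ?_⟩
  ext k
  simp [Units.smul_def]

theorem comp_perm_mem_orbit (σ : Equiv.Perm n) (v : n → R) : v ∘ σ ∈ orbit (GL n R) v := by
  have hunit : IsUnit (σ.permMatrix R) := by
    rw [isUnit_iff_isUnit_det, det_permutation]
    exact (Equiv.Perm.sign σ).isUnit.map (Int.castRingHom R)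
  exact ⟨hunit.unit, permMatrix_mulVec σ⟩

theorem mem_orbit_of_isUnit {x y : n → R} {i j : n} (hi : IsUnit (x i)) (hj : IsUnit (y j)) :
    y ∈ orbit (GL n R) x := by
  have hswap : (Pi.single i 1 : n → R) ∘ Equiv.swap j i = Pi.single j 1 := by
    ext k
    simp [Pi.single_apply, Equiv.swap_apply_eq_iff]
  rw [orbit_eq_iff.2 (mem_orbit_single_of_isUnit hi),
    ← orbit_eq_iff.2 (hswap ▸ comp_perm_mem_orbit _ _)]
  exact mem_orbit_single_of_isUnit hj

end CommRing

theorem Ideal.exists_ne_zero_mul_eq_zero_of_isNilpotent {R : Type*} [CommRing R] [Nontrivial R]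
    {I : Ideal R} (hI : IsNilpotent I) : ∃ c ≠ 0, ∀ a ∈ I, c * a = 0 := by
  classical
  have hk : I ^ Nat.find hI = 0 := Nat.find_spec hI
  have hk0 : Nat.find hI ≠ 0 := by
    intro h
    rw [h, pow_zero, Ideal.one_eq_top, Ideal.zero_eq_bot] at hk
    exact top_ne_bot hk
  obtain ⟨c, hc, hc0⟩ :=
    Submodule.exists_mem_ne_zero_of_ne_bot (Nat.find_min hI (Nat.sub_one_lt hk0))
  refine ⟨c, hc0, fun a ha => ?_⟩
  have hca : c * a ∈ I ^ Nat.find hI := by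
    rw [← Nat.sub_one_add_one hk0, pow_succ]
    exact Ideal.mul_mem_mul hc ha
  rwa [hk, Ideal.zero_eq_bot, Ideal.mem_bot] at hca

theorem RingHom.card_eq_card_mul_card_ker {R S : Type*} [Ring R] [Ring S] {π : R →+* S}
    (hπ : Function.Surjective π) : Nat.card R = Nat.card S * Nat.card (RingHom.ker π) := by
  rw [← π.toAddMonoidHom.ker.index_mul_card, AddSubgroup.index_ker,
    AddMonoidHom.range_eq_top.2 hπ]
  simp

section NilpotentKernel

variable {R K n : Type*} [CommRing R] [Field K] {π : R →+* K}

theorem isUnit_iff_map_ne_zero (hπ : Function.Surjective π) (hker : IsNilpotent (RingHom.ker π))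
    {z : R} : IsUnit z ↔ π z ≠ 0 := by
  refine ⟨fun hz => (hz.map π).ne_zero, fun hz => ?_⟩
  obtain ⟨w, hw⟩ := hπ (π z)⁻¹
  obtain ⟨k, hk⟩ := hker
  have hmem : 1 - w * z ∈ RingHom.ker π := by
    rw [RingHom.mem_ker, map_sub, map_one, map_mul, hw, inv_mul_cancel₀ hz, sub_self]
  have hnil : IsNilpotent (1 - w * z) :=
    ⟨k, by simpa [hk] using Ideal.pow_mem_pow hmem k⟩
  exact isUnit_of_mul_isUnit_right (by simpa using hnil.isUnit_one_sub)

theorem mem_faithfulVectors_iff_exists_map_ne_zero (hπ : Function.Surjective π)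
    (hker : IsNilpotent (RingHom.ker π)) {y : n → R} :
    y ∈ faithfulVectors R n ↔ ∃ j, π (y j) ≠ 0 := by
  refine ⟨fun hy => ?_, fun ⟨j, hj⟩ =>
    mem_faithfulVectors_of_isUnit ((isUnit_iff_map_ne_zero hπ hker).2 hj)⟩
  by_contra! hall
  have : Nontrivial R := hπ.nontrivial
  obtain ⟨c, hc0, hc⟩ := Ideal.exists_ne_zero_mul_eq_zero_of_isNilpotent hker
  exact hc0 (hy c (funext fun j => hc _ (hall j)))

theorem mem_orbit_of_mem_faithfulVectors [Fintype n] [DecidableEq n]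
    (hπ : Function.Surjective π) (hker : IsNilpotent (RingHom.ker π)) {x y : n → R}
    (hx : x ∈ faithfulVectors R n) (hy : y ∈ faithfulVectors R n) : y ∈ orbit (GL n R) x := by
  obtain ⟨i, hi⟩ := (mem_faithfulVectors_iff_exists_map_ne_zero hπ hker).1 hx
  obtain ⟨j, hj⟩ := (mem_faithfulVectors_iff_exists_map_ne_zero hπ hker).1 hy
  exact mem_orbit_of_isUnit ((isUnit_iff_map_ne_zero hπ hker).2 hi)
    ((isUnit_iff_map_ne_zero hπ hker).2 hj)

theorem card_faithfulVectors_of_surjective [Fintype n] [Finite R]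
    (hπ : Function.Surjective π) (hker : IsNilpotent (RingHom.ker π)) :
    (Nat.card (faithfulVectors R n) : ℝ)
      = Nat.card R ^ Fintype.card n * (1 - ((Nat.card K : ℝ) ^ Fintype.card n)⁻¹) := by
  set N : Set (n → R) := {y | ∀ j, y j ∈ RingHom.ker π}
  have hcompl : faithfulVectors R n = Nᶜ := by
    ext y
    simp [N, mem_faithfulVectors_iff_exists_map_ne_zero hπ hker]
  have hN : Nat.card N = Nat.card (RingHom.ker π) ^ Fintype.card n := by
    rw [← Nat.card_eq_fintype_card, ← Nat.card_fun]
    exact Nat.card_congr Equiv.subtypePiEquivPi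
  have hsum : Nat.card N + Nat.card (faithfulVectors R n) = Nat.card R ^ Fintype.card n := by
    rw [hcompl, Nat.card_coe_set_eq, Nat.card_coe_set_eq, Set.ncard_add_ncard_compl, Nat.card_fun,
      Nat.card_eq_fintype_card (α := n)]
  have hK : (Nat.card K : ℝ) ≠ 0 := by
    have : Finite K := Finite.of_surjective π hπ
    exact_mod_cast Nat.card_pos.ne'
  rw [hN, RingHom.card_eq_card_mul_card_ker hπ] at hsum
  have hF : (Nat.card (faithfulVectors R n) : ℝ)
      = ((Nat.card K * Nat.card (RingHom.ker π)) ^ Fintype.card n : ℕ)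
        - (Nat.card (RingHom.ker π) ^ Fintype.card n : ℕ) := by
    rw [← hsum]
    push_cast
    ring
  rw [hF, RingHom.card_eq_card_mul_card_ker hπ]
  push_cast
  field_simp
  ring

end NilpotentKernel

section PiDecomposition

variable {R ι n : Type*} [CommRing R] {L : ι → Type*} [∀ i, CommRing (L i)]

theorem mem_faithfulVectors_iff_forall (φ : R ≃+* ∀ i, L i) {y : n → R} :
    y ∈ faithfulVectors R n ↔ ∀ i, (fun k => φ (y k) i) ∈ faithfulVectors (L i) n := by
  classical
  refine ⟨fun hy i c hc => ?_, fun hy c hc => φ.injective (funext fun i => ?_)⟩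
  · have hsingle : φ.symm (Pi.single i c) • y = 0 := by
      ext k
      refine φ.injective (funext fun i' => ?_)
      rcases eq_or_ne i' i with rfl | hi'
      · simpa using congrFun hc k
      · simp [Pi.single_eq_of_ne hi']
    simpa using congrFun (φ.symm.injective ((hy _ hsingle).trans (map_zero φ.symm).symm)) i
  · rw [map_zero]
    exact hy i (φ c i) (funext fun k => by simpa using congrArg (fun v => φ (v k) i) hc)

theorem mem_orbit_of_forall_mem_orbit [Fintype n] [DecidableEq n] (φ : R ≃+* ∀ i, L i)
    {x y : n → R} (h : ∀ i, (fun k => φ (y k) i) ∈ orbit (GL n (L i)) (fun k => φ (x k) i)) :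
    y ∈ orbit (GL n R) x := by
  choose g hg using h
  let Ψ : GL n R ≃* ∀ i, GL n (L i) :=
    (Units.mapEquiv (φ.mapMatrix.trans piRingEquiv).toMulEquiv).trans MulEquiv.piUnits
  refine ⟨Ψ.symm g, funext fun k => φ.injective (funext fun i => ?_)⟩
  rw [← congrFun (hg i) k]
  simp [Ψ, Units.smul_def, mulVec, dotProduct]

theorem card_faithfulVectors_eq_prod [Fintype ι] (φ : R ≃+* ∀ i, L i) :
    Nat.card (faithfulVectors R n) = ∏ i, Nat.card (faithfulVectors (L i) n) := by
  let e : (n → R) ≃ ∀ i, n → L i := (Equiv.piCongrRight fun _ => φ.toEquiv).trans (Equiv.piComm _)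
  rw [← Nat.card_pi]
  exact Nat.card_congr ((e.subtypeEquiv fun _ => mem_faithfulVectors_iff_forall φ).trans
    Equiv.subtypePiEquivPi)

end PiDecomposition

theorem Ideal.isNilpotent_ker_factor_pow {R : Type*} [CommRing R] {p : Ideal R} {e : ℕ}
    (he : e ≠ 0) :
    IsNilpotent (RingHom.ker (Ideal.Quotient.factor (Ideal.pow_le_self he : p ^ e ≤ p))) :=
  ⟨e, by rw [Ideal.Quotient.factor_ker, ← Ideal.map_pow, Ideal.map_quotient_self]; rfl⟩

section DedekindDomain

open UniqueFactorizationMonoid IsDedekindDomain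

variable {A n : Type*} [CommRing A] [IsDedekindDomain A] {𝔞 : Ideal A}

theorem isMaximal_of_mem_factors {P : Ideal A} (hP : P ∈ factors 𝔞) : P.IsMaximal :=
  (Ideal.isPrime_of_prime (prime_of_factor P hP)).isMaximal (prime_of_factor P hP).ne_zero

theorem primesDvd_eq_factors_toFinset (h𝔞 : 𝔞 ≠ ⊥) :
    primesDvd 𝔞 = ↑(factors 𝔞).toFinset := by
  ext P
  rw [Finset.mem_coe, Multiset.mem_toFinset, factors_eq_normalizedFactors,
    mem_normalizedFactors_iff h𝔞]
  refine ⟨fun ⟨hPrime, hP0, hdvd⟩ => ⟨(Ideal.prime_iff_isPrime hP0).2 hPrime, hdvd⟩,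
    fun ⟨hPrime, hdvd⟩ => ⟨Ideal.isPrime_of_prime hPrime, hPrime.ne_zero, hdvd⟩⟩

theorem orbit_eq_faithfulVectors [Fintype n] [DecidableEq n] (h𝔞 : 𝔞 ≠ ⊥)
    {x : n → A ⧸ 𝔞} (hx : x ∈ faithfulVectors (A ⧸ 𝔞) n) :
    orbit (GL n (A ⧸ 𝔞)) x = faithfulVectors (A ⧸ 𝔞) n := by
  refine (orbit_subset_faithfulVectors hx).antisymm fun y hy => ?_
  let φ := quotientEquivPiFactors h𝔞
  refine mem_orbit_of_forall_mem_orbit φ fun P => ?_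
  have hP := Multiset.mem_toFinset.1 P.2
  have := isMaximal_of_mem_factors hP
  let := Ideal.Quotient.field (P : Ideal A)
  exact mem_orbit_of_mem_faithfulVectors (K := A ⧸ (P : Ideal A))
    (Ideal.Quotient.factor_surjective _)
    (Ideal.isNilpotent_ker_factor_pow (Multiset.count_ne_zero.2 hP))
    ((mem_faithfulVectors_iff_forall φ).1 hx P) ((mem_faithfulVectors_iff_forall φ).1 hy P)

theorem card_faithfulVectors_quotient [Fintype n]
    (hfin : ∀ 𝔟 : Ideal A, 𝔟 ≠ ⊥ → Finite (A ⧸ 𝔟)) (h𝔞 : 𝔞 ≠ ⊥) :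
    (Nat.card (faithfulVectors (A ⧸ 𝔞) n) : ℝ) = (idealNorm 𝔞 : ℝ) ^ Fintype.card n *
      ∏ᶠ 𝔭 ∈ primesDvd 𝔞, (1 - ((idealNorm 𝔭 : ℝ) ^ Fintype.card n)⁻¹) := by
  let φ := quotientEquivPiFactors h𝔞
  have hlocal : ∀ P : (factors 𝔞).toFinset,
      (Nat.card (faithfulVectors (A ⧸ (P : Ideal A) ^ (factors 𝔞).count (P : Ideal A)) n) : ℝ)
        = Nat.card (A ⧸ (P : Ideal A) ^ (factors 𝔞).count (P : Ideal A)) ^ Fintype.card n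
          * (1 - ((idealNorm (P : Ideal A) : ℝ) ^ Fintype.card n)⁻¹) := fun P => by
    have hP := Multiset.mem_toFinset.1 P.2
    have := isMaximal_of_mem_factors hP
    have := hfin ((P : Ideal A) ^ (factors 𝔞).count (P : Ideal A))
      (pow_ne_zero _ (prime_of_factor _ hP).ne_zero)
    let := Ideal.Quotient.field (P : Ideal A)
    exact card_faithfulVectors_of_surjective (Ideal.Quotient.factor_surjective _)
      (Ideal.isNilpotent_ker_factor_pow (Multiset.count_ne_zero.2 hP))
  rw [card_faithfulVectors_eq_prod φ, Nat.cast_prod, Finset.prod_congr rfl fun P _ => hlocal P,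
    Finset.prod_mul_distrib, Finset.prod_pow, idealNorm, Nat.card_congr φ.toEquiv, Nat.card_pi,
    primesDvd_eq_factors_toFinset h𝔞, finprod_mem_coe_finset, Nat.cast_prod]
  congr 1
  exact Finset.prod_coe_sort (factors 𝔞).toFinset
    fun 𝔭 => 1 - ((idealNorm 𝔭 : ℝ) ^ Fintype.card n)⁻¹

end DedekindDomain

theorem card_GL_orbit_general
    (A : Type*) [CommRing A] [IsDedekindDomain A]
    (hAfin : ∀ 𝔟 : Ideal A, 𝔟 ≠ ⊥ → Finite (A ⧸ 𝔟))
    (𝔞 : Ideal A) (h𝔞 : 𝔞 ≠ ⊥) (r : ℕ)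
    (x : Fin r → A ⧸ 𝔞) (hx : ∀ a : A, a • x = 0 ↔ a ∈ 𝔞) :
    (Nat.card {y : Fin r → A ⧸ 𝔞 |
        ∃ g : GL (Fin r) (A ⧸ 𝔞), Matrix.mulVec (g : Matrix (Fin r) (Fin r) (A ⧸ 𝔞)) x = y} : ℝ)
      = (idealNorm 𝔞 : ℝ) ^ r * ∏ᶠ 𝔭 ∈ primesDvd 𝔞, (1 - ((idealNorm 𝔭 : ℝ) ^ r)⁻¹) := by
  have hxF : x ∈ faithfulVectors (A ⧸ 𝔞) (Fin r) := by
    intro c hc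
    obtain ⟨a, rfl⟩ := Ideal.Quotient.mk_surjective c
    exact Ideal.Quotient.eq_zero_iff_mem.2 ((hx a).1 hc)
  change (Nat.card (orbit (GL (Fin r) (A ⧸ 𝔞)) x) : ℝ) = _
  rw [orbit_eq_faithfulVectors h𝔞 hxF, card_faithfulVectors_quotient hAfin h𝔞, Fintype.card_fin]

/-- **Lemma (orbit of a vector of maximal order under `GL_r(A ⧸ 𝔞)`).**
Let `A` be a Dedekind domain, not a field, all of whose proper quotients are finite, let
`𝔞 ⊆ A` be a nonzero ideal, `r ≥ 1`, and let `x ∈ (A ⧸ 𝔞)^r` have annihilator in `A`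
exactly `𝔞`. Then the orbit of `x` under `GL_r(A ⧸ 𝔞)` has cardinality
`|𝔞|^r · ∏_{𝔭 ∣ 𝔞} (1 - |𝔭|^{-r})`. -/
theorem card_GL_orbit
    (A : Type*) [CommRing A] [IsDomain A] [IsDedekindDomain A] (hA : ¬IsField A)
    (hAfin : ∀ 𝔟 : Ideal A, 𝔟 ≠ ⊥ → Finite (A ⧸ 𝔟))
    (𝔞 : Ideal A) (h𝔞 : 𝔞 ≠ ⊥) (r : ℕ) (hr : 1 ≤ r)
    (x : Fin r → A ⧸ 𝔞) (hx : ∀ a : A, a • x = 0 ↔ a ∈ 𝔞) :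
    (Nat.card {y : Fin r → A ⧸ 𝔞 |
        ∃ g : GL (Fin r) (A ⧸ 𝔞), Matrix.mulVec (g : Matrix (Fin r) (Fin r) (A ⧸ 𝔞)) x = y} : ℝ)
      = (idealNorm 𝔞 : ℝ) ^ r * ∏ᶠ 𝔭 ∈ primesDvd 𝔞, (1 - ((idealNorm 𝔭 : ℝ) ^ r)⁻¹) :=
  card_GL_orbit_general A hAfin 𝔞 h𝔞 r x hx
end

section
/- Let K be a field, let M be a (G_K,A)-module of rank r ≥ 2, let L/K be a finite separable extension inside K^sep, and let H ⊆ M be an A-submodule that is stable under Gal(K^sep/L) (as a set) and is isomorphic to A/𝔞 as an A-module, for some nonzero ideal 𝔞 ⊆ A. Then card(H) = |𝔞| ≤ (I(𝔞)·[L:K])^{1/(r-1)}. -/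
open Submodule

section GaloisModulePreamble

variable {A : Type*} [CommRing A]
variable {K Ksep : Type*} [Field K] [Field Ksep] [Algebra K Ksep]
variable {M : Type*} [AddCommGroup M] [Module A M]

/-- Restriction of an `A`-linear automorphism of `M` to the `𝔞`-torsion submodule `M[𝔞]`. -/
def LinearEquiv.restrictTorsionBySet (f : M ≃ₗ[A] M) (𝔞 : Ideal A) :
    torsionBySet A M 𝔞 ≃ₗ[A] torsionBySet A M 𝔞 :=
  LinearEquiv.ofSubmodules f _ _ <| by
    ext x
    simp only [Submodule.mem_map, mem_torsionBySet_iff]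
    constructor
    · rintro ⟨y, hy, rfl⟩ a
      simpa using congrArg f (hy a)
    · intro hx
      refine ⟨f.symm x, fun a => ?_, f.apply_symm_apply x⟩
      simpa using congrArg f.symm (hx a)

/-- The Galois representation `ρ_𝔞 : G_K → Aut_A(M[𝔞])` induced by an action
`ρ : G_K →* Aut_A(M)`. -/
def galRep (ρ : (Ksep ≃ₐ[K] Ksep) →* (M ≃ₗ[A] M)) (𝔞 : Ideal A) :
    (Ksep ≃ₐ[K] Ksep) →* (torsionBySet A M 𝔞 ≃ₗ[A] torsionBySet A M 𝔞) where
  toFun σ := (ρ σ).restrictTorsionBySet 𝔞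
  map_one' := by
    apply LinearEquiv.toLinearMap_injective
    apply LinearMap.ext
    intro x
    apply Subtype.ext
    simp [LinearEquiv.restrictTorsionBySet]
  map_mul' σ τ := by
    apply LinearEquiv.toLinearMap_injective
    apply LinearMap.ext
    intro x
    apply Subtype.ext
    simp [LinearEquiv.restrictTorsionBySet]

/-- The index `I(𝔞)` of the image of the Galois representation `ρ_𝔞` in `Aut_A(M[𝔞])`. -/
noncomputable def galIndex (ρ : (Ksep ≃ₐ[K] Ksep) →* (M ≃ₗ[A] M)) (𝔞 : Ideal A) : ℕ :=
  (galRep ρ 𝔞).range.index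

/-- `M` is a `(G_K, A)`-module of rank `r` via the action `ρ : G_K →* Aut_A(M)`:
every torsion element is fixed by an open subgroup of `G_K` (equivalently, has open
stabilizer, for the Krull topology), and `M[𝔞] ≅ (A ⧸ 𝔞)^r` for every nonzero ideal `𝔞`. -/
structure IsGaloisModule (ρ : (Ksep ≃ₐ[K] Ksep) →* (M ≃ₗ[A] M)) (r : ℕ) : Prop where
  openStab : ∀ x : M, x ∈ torsion A M → IsOpen {σ : Ksep ≃ₐ[K] Ksep | ρ σ x = x}
  rankEq : ∀ 𝔞 : Ideal A, 𝔞 ≠ ⊥ →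
    Nonempty (torsionBySet A M (𝔞 : Set A) ≃ₗ[A] (Fin r → A ⧸ 𝔞))

/-- The `L`-rational points of a subset `X ⊆ M`: the elements of `X` fixed by
`Gal(Ksep/L)`. -/
def galPoints (ρ : (Ksep ≃ₐ[K] Ksep) →* (M ≃ₗ[A] M)) (L : IntermediateField K Ksep)
    (X : Set M) : Set M :=
  {x ∈ X | ∀ σ ∈ L.fixingSubgroup, ρ σ x = x}

/-- The subgroup of `G_K` fixing a subset `H ⊆ M` pointwise. -/
def fixingSubgroupOf (ρ : (Ksep ≃ₐ[K] Ksep) →* (M ≃ₗ[A] M)) (H : Set M) :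
    Subgroup (Ksep ≃ₐ[K] Ksep) where
  carrier := {σ | ∀ x ∈ H, ρ σ x = x}
  one_mem' := by simp
  mul_mem' := by
    intro σ τ hσ hτ x hx
    simp only [map_mul]
    change ρ σ (ρ τ x) = x
    rw [hτ x hx, hσ x hx]
  inv_mem' := by
    intro σ hσ x hx
    simp only [map_inv]
    conv_lhs => rw [← hσ x hx]
    exact (ρ σ).symm_apply_apply x

/-- The field `K(H)` generated over `K` by a set `H` of points of `M`: the fixed field
of the subgroup of `G_K` fixing `H` pointwise. -/
noncomputable def fieldGenBy (ρ : (Ksep ≃ₐ[K] Ksep) →* (M ≃ₗ[A] M)) (H : Set M) :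
    IntermediateField K Ksep :=
  IntermediateField.fixedField (fixingSubgroupOf ρ H)

end GaloisModulePreamble

/-!
A generator `x` of `H` has annihilator `𝔞`, so in `M[𝔞] ≅ (A ⧸ 𝔞)^r` it is unimodular: over the
finite ring `A ⧸ 𝔞` an ideal of zero divisors has a nonzero annihilator, so the coordinates of `x`
generate the unit ideal and some linear form `g` has `g x = 1`. The transvections
`w ↦ w + g(w) • z` with `z ∈ ker g` then lie in pairwise distinct cosets of any group of
automorphisms preserving the line through `x`, such as the image of `Gal(Ksep/L)`. That image
therefore has index at least `|ker g| = |𝔞|^(r-1)` in `Aut_A(M[𝔞])`, while its index is at most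
`I(𝔞) · [G_K : G_L] ≤ I(𝔞) · [L:K]`.
-/

theorem Submodule.torsionOf_coe {R M : Type*} [Semiring R] [AddCommMonoid M] [Module R M]
    (p : Submodule R M) (x : p) : Ideal.torsionOf R M x = Ideal.torsionOf R p x := by
  ext a
  simp only [Ideal.mem_torsionOf_iff, ← p.coe_smul, ZeroMemClass.coe_eq_zero]

theorem Submodule.exists_torsionOf_eq_and_span_eq {A M : Type*} [CommRing A] [AddCommGroup M]
    [Module A M] {H : Submodule A M} {𝔞 : Ideal A} (e : H ≃ₗ[A] A ⧸ 𝔞) :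
    ∃ x : M, Ideal.torsionOf A M x = 𝔞 ∧ A ∙ x = H := by
  have hsmul (a : A) : a • e.symm 1 = e.symm (Ideal.Quotient.mk 𝔞 a) := by
    rw [← map_smul, Algebra.smul_def, mul_one, Ideal.Quotient.algebraMap_eq]
  refine ⟨e.symm 1, Ideal.ext fun a => ?_, le_antisymm ?_ fun y hy => ?_⟩
  · rw [Ideal.mem_torsionOf_iff, ← Ideal.Quotient.eq_zero_iff_mem, ← e.symm.map_eq_zero_iff,
      ← hsmul, ← H.coe_smul, ZeroMemClass.coe_eq_zero]
  · exact (span_singleton_le_iff_mem _ _).mpr (e.symm 1).2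
  · obtain ⟨a, ha⟩ := Ideal.Quotient.mk_surjective (e ⟨y, hy⟩)
    refine mem_span_singleton.mpr ⟨a, ?_⟩
    rw [← H.coe_smul, hsmul, ha, LinearEquiv.symm_apply_apply]

theorem exists_dual_eq_one_of_torsionOf_eq_bot {R ι : Type*} [CommRing R] [IsArtinianRing R]
    [Fintype ι] {x : ι → R} (hx : Ideal.torsionOf R (ι → R) x = ⊥) :
    ∃ g : Module.Dual R (ι → R), g x = 1 := by
  have hspan : Ideal.span (Set.range x) = ⊤ := by
    by_contra hne
    have hdisj : Disjoint (Ideal.span (Set.range x) : Set R) (nonZeroDivisors R) :=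
      Set.disjoint_left.mpr fun a ha hreg =>
        hne (Ideal.eq_top_of_isUnit_mem _ ha (IsArtinianRing.isUnit_of_mem_nonZeroDivisors hreg))
    obtain ⟨c, hc, hc0⟩ :=
      SetLike.exists_of_lt (Ideal.bot_lt_annihilator_of_disjoint_nonZeroDivisors hdisj)
    refine hc0 ((Submodule.eq_bot_iff _).mp hx c (funext fun i => ?_))
    exact congrArg Subtype.val
      (Module.mem_annihilator.mp hc ⟨x i, Ideal.subset_span ⟨i, rfl⟩⟩)
  obtain ⟨c, hc⟩ := (mem_span_range_iff_exists_fun R).mp (hspan ▸ mem_top : (1 : R) ∈ _)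
  exact ⟨∑ i, c i • LinearMap.proj i, by simpa using hc⟩

theorem LinearMap.card_ker_mul_card_of_surjective {R V : Type*} [Ring R] [AddCommGroup V]
    [Module R V] (g : V →ₗ[R] R) (hg : Function.Surjective g) :
    Nat.card (LinearMap.ker g) * Nat.card R = Nat.card V := by
  have := AddSubgroup.card_mul_index g.toAddMonoidHom.ker
  rwa [AddSubgroup.index_ker, AddMonoidHom.range_eq_top.mpr hg, AddSubgroup.card_top] at this

theorem card_le_index_mul_card_of_forall_apply_eq_smul {A R V : Type*} [CommRing A] [Ring R]
    [Algebra A R] [AddCommGroup V] [Module R V] [Module A V] [IsScalarTower A R V] [Finite V]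
    {g : Module.Dual R V} {x : V} (hgx : g x = 1) (Δ : Subgroup (V ≃ₗ[A] V))
    (hΔ : ∀ δ ∈ Δ, ∃ a : R, δ x = a • x) :
    Nat.card V ≤ Δ.index * Nat.card R := by
  have : Finite (V ≃ₗ[A] V) := Finite.of_injective _ DFunLike.coe_injective
  let τ : LinearMap.ker g → V ≃ₗ[A] V := fun z =>
    (LinearEquiv.transvection (LinearMap.mem_ker.mp z.2)).restrictScalars A
  have hτ : Function.Injective fun z => (τ z : (V ≃ₗ[A] V) ⧸ Δ) := by
    rintro ⟨z, hz⟩ ⟨z', hz'⟩ h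
    rw [LinearMap.mem_ker] at hz hz'
    have hx : ((τ ⟨z, hz⟩)⁻¹ * τ ⟨z', hz'⟩) x = x + (z' - z) := by
      change (τ _).symm (τ _ x) = _
      rw [LinearEquiv.symm_apply_eq]
      simp only [τ, LinearEquiv.restrictScalars_apply, LinearEquiv.transvection.coe_apply,
        LinearMap.transvection.apply, map_add, map_sub, hgx, hz, hz', one_smul,
        zero_smul, add_zero]
      abel
    obtain ⟨a, ha⟩ := hΔ _ (QuotientGroup.eq.mp h)
    rw [hx] at ha
    have ha1 : a = 1 := by simpa [hgx, hz, hz'] using (congrArg g ha).symm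
    rw [ha1, one_smul, add_eq_left, sub_eq_zero] at ha
    exact Subtype.ext ha.symm
  calc Nat.card V = Nat.card (LinearMap.ker g) * Nat.card R :=
        (g.card_ker_mul_card_of_surjective fun a => ⟨a • x, by simp [hgx]⟩).symm
    _ ≤ Δ.index * Nat.card R := Nat.mul_le_mul_right _ (Nat.card_le_card_of_injective _ hτ)

theorem card_pow_le_index_mul_card {A M : Type*} [CommRing A] [AddCommGroup M] [Module A M]
    {𝔞 : Ideal A} [Finite (A ⧸ 𝔞)] {r : ℕ} (e : torsionBySet A M 𝔞 ≃ₗ[A] (Fin r → A ⧸ 𝔞))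
    {x : torsionBySet A M 𝔞} (hx : Ideal.torsionOf A _ x ≤ 𝔞)
    (Δ : Subgroup (torsionBySet A M 𝔞 ≃ₗ[A] torsionBySet A M 𝔞))
    (hΔ : ∀ δ ∈ Δ, δ x ∈ A ∙ x) :
    Nat.card (A ⧸ 𝔞) ^ r ≤ Δ.index * Nat.card (A ⧸ 𝔞) := by
  have : Finite (torsionBySet A M 𝔞) := Finite.of_equiv _ e.symm.toEquiv
  let e' := e.extendScalarsOfSurjective (Ideal.Quotient.mk_surjective (I := 𝔞))
  have he'x : Ideal.torsionOf (A ⧸ 𝔞) _ (e' x) = ⊥ := by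
    refine (Submodule.eq_bot_iff _).mpr fun c hc => ?_
    obtain ⟨a, rfl⟩ := Ideal.Quotient.mk_surjective c
    rw [Ideal.mem_torsionOf_iff, ← map_smul, torsionBySet.mk_smul,
      LinearEquiv.map_eq_zero_iff] at hc
    exact Ideal.Quotient.eq_zero_iff_mem.mpr (hx hc)
  obtain ⟨g, hg⟩ := exists_dual_eq_one_of_torsionOf_eq_bot he'x
  have hΔ' : ∀ δ ∈ Δ, ∃ c : A ⧸ 𝔞, δ x = c • x := fun δ hδ => by
    obtain ⟨a, ha⟩ := mem_span_singleton.mp (hΔ δ hδ)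
    exact ⟨Ideal.Quotient.mk 𝔞 a, ha.symm⟩
  have := card_le_index_mul_card_of_forall_apply_eq_smul (g := g ∘ₗ e'.toLinearMap) hg Δ hΔ'
  rwa [Nat.card_congr e.toEquiv, Nat.card_fun, Nat.card_fin] at this

theorem IntermediateField.inv_mul_mem_fixingSubgroup_iff {K E : Type*} [Field K] [Field E]
    [Algebra K E] (L : IntermediateField K E) (σ τ : E ≃ₐ[K] E) :
    σ⁻¹ * τ ∈ L.fixingSubgroup ↔ ∀ x ∈ L, σ x = τ x := by
  simp only [L.mem_fixingSubgroup_iff, AlgEquiv.mul_apply]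
  exact forall₂_congr fun x _ => by rw [eq_comm, ← AlgEquiv.symm_apply_eq]; rfl

theorem IntermediateField.exists_injective_quotient_fixingSubgroup {K E : Type*} [Field K]
    [Field E] [Algebra K E] (L : IntermediateField K E) :
    ∃ res : (E ≃ₐ[K] E) ⧸ L.fixingSubgroup → (L →ₐ[K] E), Function.Injective res := by
  refine ⟨Quotient.lift (fun σ => (σ : E →ₐ[K] E).comp L.val) fun σ τ h => AlgHom.ext fun x =>
    (L.inv_mul_mem_fixingSubgroup_iff σ τ).mp (QuotientGroup.leftRel_apply.mp h) x x.2, ?_⟩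
  rintro ⟨σ⟩ ⟨τ⟩ h
  exact Quotient.sound (QuotientGroup.leftRel_apply.mpr
    ((L.inv_mul_mem_fixingSubgroup_iff σ τ).mpr fun x hx => DFunLike.congr_fun h ⟨x, hx⟩))

instance IntermediateField.finiteIndex_fixingSubgroup {K E : Type*} [Field K] [Field E]
    [Algebra K E] (L : IntermediateField K E) [FiniteDimensional K L] :
    L.fixingSubgroup.FiniteIndex :=
  have ⟨_, hres⟩ := L.exists_injective_quotient_fixingSubgroup
  have := Finite.of_injective _ hres
  Subgroup.finiteIndex_of_finite_quotient

theorem IntermediateField.index_fixingSubgroup_le_finrank {K E : Type*} [Field K] [Field E]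
    [Algebra K E] (L : IntermediateField K E) [FiniteDimensional K L] :
    L.fixingSubgroup.index ≤ Module.finrank K L := by
  obtain ⟨res, hres⟩ := L.exists_injective_quotient_fixingSubgroup
  calc L.fixingSubgroup.index = Nat.card ((E ≃ₐ[K] E) ⧸ L.fixingSubgroup) :=
        L.fixingSubgroup.index_eq_card
    _ ≤ Nat.card (L →ₐ[K] E) := Nat.card_le_card_of_injective res hres
    _ ≤ Module.finrank K L := card_algHom_le_finrank K L E

theorem Subgroup.index_map_le_index_mul {G G' : Type*} [Group G] [Group G'] (H : Subgroup G)
    [H.FiniteIndex] (f : G →* G') : (H.map f).index ≤ H.index * f.range.index := by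
  rw [H.index_map f]
  exact Nat.mul_le_mul_right _ (index_antitone le_sup_left)

theorem le_rpow_one_div_sub_one_of_pow_le_mul {n D r : ℕ} (hr : 2 ≤ r) (h : n ^ r ≤ D * n) :
    (n : ℝ) ≤ (D : ℝ) ^ ((1 : ℝ) / ((r : ℝ) - 1)) := by
  rcases n.eq_zero_or_pos with rfl | hn
  · simpa using Real.rpow_nonneg (Nat.cast_nonneg D) _
  have hpow : n ^ (r - 1) ≤ D := by
    rw [← Nat.sub_add_cancel (by omega : 1 ≤ r), pow_succ] at h
    exact Nat.le_of_mul_le_mul_right h hn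
  have hr' : (r : ℝ) - 1 = ((r - 1 : ℕ) : ℝ) := by push_cast [Nat.cast_sub (by omega : 1 ≤ r)]; ring
  rw [one_div, Real.le_rpow_inv_iff_of_pos (by positivity) (by positivity) (by
    rw [hr']; exact_mod_cast (by omega : 0 < r - 1)), hr', Real.rpow_natCast]
  exact_mod_cast hpow

theorem galois_stable_cyclic_submodule_bound_general
    {A : Type*} [CommRing A]
    (hAfin : ∀ 𝔟 : Ideal A, 𝔟 ≠ ⊥ → Finite (A ⧸ 𝔟))
    {K Ksep : Type*} [Field K] [Field Ksep] [Algebra K Ksep]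
    {M : Type*} [AddCommGroup M] [Module A M]
    (ρ : (Ksep ≃ₐ[K] Ksep) →* (M ≃ₗ[A] M)) (r : ℕ) (hr : 2 ≤ r)
    (hGM : IsGaloisModule ρ r)
    (L : IntermediateField K Ksep) (hL : FiniteDimensional K L)
    (𝔞 : Ideal A) (h𝔞 : 𝔞 ≠ ⊥)
    (H : Submodule A M)
    (hstab : ∀ σ ∈ L.fixingSubgroup, ∀ x ∈ H, ρ σ x ∈ H)
    (hiso : Nonempty (H ≃ₗ[A] A ⧸ 𝔞)) :
    Nat.card H = idealNorm 𝔞 ∧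
    (idealNorm 𝔞 : ℝ)
      ≤ ((galIndex ρ 𝔞 : ℝ) * (Module.finrank K L : ℝ)) ^ ((1 : ℝ) / ((r : ℝ) - 1)) := by
  obtain ⟨eH⟩ := hiso
  have := hAfin 𝔞 h𝔞
  obtain ⟨eT⟩ := hGM.rankEq 𝔞 h𝔞
  obtain ⟨x, hxtor, hxspan⟩ := exists_torsionOf_eq_and_span_eq eH
  have hxT : x ∈ torsionBySet A M 𝔞 :=
    (mem_torsionBySet_iff _ _).mpr fun ⟨a, ha⟩ => (Ideal.mem_torsionOf_iff x a).mp (hxtor ▸ ha)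
  let x' : torsionBySet A M 𝔞 := ⟨x, hxT⟩
  have hΔ : ∀ δ ∈ L.fixingSubgroup.map (galRep ρ 𝔞), δ x' ∈ A ∙ x' := by
    rintro _ ⟨σ, hσ, rfl⟩
    obtain ⟨a, ha⟩ := mem_span_singleton.mp
      (hxspan ▸ hstab σ hσ x (hxspan ▸ mem_span_singleton_self x))
    exact mem_span_singleton.mpr ⟨a, Subtype.ext ha⟩
  have key : idealNorm 𝔞 ^ r ≤ (galIndex ρ 𝔞 * Module.finrank K L) * idealNorm 𝔞 :=
    calc idealNorm 𝔞 ^ r ≤ (L.fixingSubgroup.map (galRep ρ 𝔞)).index * idealNorm 𝔞 :=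
          card_pow_le_index_mul_card eT ((torsionOf_coe _ x').symm.trans hxtor).le _ hΔ
      _ ≤ (L.fixingSubgroup.index * galIndex ρ 𝔞) * idealNorm 𝔞 := by
          gcongr; exact L.fixingSubgroup.index_map_le_index_mul (galRep ρ 𝔞)
      _ ≤ (galIndex ρ 𝔞 * Module.finrank K L) * idealNorm 𝔞 := by
          rw [mul_comm L.fixingSubgroup.index]; gcongr; exact L.index_fixingSubgroup_le_finrank
  exact ⟨Nat.card_congr eH.toEquiv, by exact_mod_cast le_rpow_one_div_sub_one_of_pow_le_mul hr key⟩

/-- **Proposition (bound on Galois-stable cyclic submodules).**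
Let `K` be a field and `M` a `(G_K, A)`-module of rank `r ≥ 2`, where `A` is a Dedekind
domain, not a field, all of whose proper quotients are finite. Let `L/K` be a finite
separable extension inside `Ksep` and `H ⊆ M` an `A`-submodule stable under
`Gal(Ksep/L)` with `H ≅ A ⧸ 𝔞` for a nonzero ideal `𝔞 ⊆ A`. Then
`card H = |𝔞| ≤ (I(𝔞) · [L:K]) ^ (1/(r-1))`. -/
theorem galois_stable_cyclic_submodule_bound
    {A : Type*} [CommRing A] [IsDomain A] [IsDedekindDomain A] (hA : ¬IsField A)
    (hAfin : ∀ 𝔟 : Ideal A, 𝔟 ≠ ⊥ → Finite (A ⧸ 𝔟))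
    {K Ksep : Type*} [Field K] [Field Ksep] [Algebra K Ksep] [IsSepClosure K Ksep]
    {M : Type*} [AddCommGroup M] [Module A M]
    (ρ : (Ksep ≃ₐ[K] Ksep) →* (M ≃ₗ[A] M)) (r : ℕ) (hr : 2 ≤ r)
    (hGM : IsGaloisModule ρ r)
    (L : IntermediateField K Ksep) (hL : FiniteDimensional K L)
    (𝔞 : Ideal A) (h𝔞 : 𝔞 ≠ ⊥)
    (H : Submodule A M)
    (hstab : ∀ σ ∈ L.fixingSubgroup, ∀ x ∈ H, ρ σ x ∈ H)
    (hiso : Nonempty (H ≃ₗ[A] A ⧸ 𝔞)) :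
    Nat.card H = idealNorm 𝔞 ∧
    (idealNorm 𝔞 : ℝ)
      ≤ ((galIndex ρ 𝔞 : ℝ) * (Module.finrank K L : ℝ)) ^ ((1 : ℝ) / ((r : ℝ) - 1)) :=
  galois_stable_cyclic_submodule_bound_general hAfin ρ r hr hGM L hL 𝔞 h𝔞 H hstab hiso
end
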